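/- Assume the axiom set A satisfies nono(A) and cov(A) with respect to the functional dependency declarations F. If S improves P (via the Fundep rule, with S a most general unifier of the determined positions), then gr_A(P) = gr_A(S P): the satisfiable ground instances of the predicate list P coincide with those of S P. -/

import Mathlib

/-- Types: variables, constants, and function types. -/
inductive Ty : Type
  | var : ℕ → Ty
  | const : ℕ → Ty
  | arrow : Ty → Ty → Ty
  deriving DecidableEq

/-- A type is ground if it contains no variables. -/
def Ty.Ground : Ty → Prop
  | .var _ => False
  | .const _ => True
  | .arrow t u => t.Ground ∧ u.Ground

/-- Homomorphic extension of a substitution `S : ℕ → Ty` to types. -/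
def Ty.subst (S : ℕ → Ty) : Ty → Ty
  | .var n => S n
  | .const k => .const k
  | .arrow t u => .arrow (t.subst S) (u.subst S)

/-- A substitution is ground if it maps every variable to a ground type. -/
def GroundSubst (S : ℕ → Ty) : Prop := ∀ n, (S n).Ground

/-- A predicate `C τ⃗`: a class name applied to a list of types. -/
structure OPred : Type where
  cls : ℕ
  args : List Ty
  deriving DecidableEq

/-- Substitutions act on predicates argumentwise. -/
def OPred.subst (S : ℕ → Ty) (p : OPred) : OPred := ⟨p.cls, p.args.map (Ty.subst S)⟩

/-- An instance axiom `Q ⇒ π₀` with context `Q` and head `π₀`. -/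
structure Axm : Type where
  ctx : List OPred
  head : OPred

/-- The entailment relation `P ⊩_A π`. -/
inductive Entails (A : Set Axm) : Set OPred → OPred → Prop
  | assume {P : Set OPred} {π : OPred} : π ∈ P → Entails A P π
  | axm {P : Set OPred} {ax : Axm} {S : ℕ → Ty} {π : OPred} :
      ax ∈ A → ax.head.subst S = π →
      (∀ q ∈ ax.ctx, Entails A P (q.subst S)) →
      Entails A P π

/-- The set of variable indices occurring in a type. -/
def Ty.vars : Ty → Set ℕ
  | .var n => {n}
  | .const _ => ∅
  | .arrow t u => t.vars ∪ u.vars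

/-- Two lists of types agree at every position in `X`. -/
def AgreeOn (X : Set ℕ) (ts us : List Ty) : Prop := ∀ i ∈ X, ts[i]? = us[i]?

/-- `ftv_X(π)`: the variables occurring in the arguments of `π` at positions in `X`. -/
def OPred.ftvAt (π : OPred) (X : Set ℕ) : Set ℕ :=
  ⋃ i ∈ X, (match π.args[i]? with | some t => t.vars | none => ∅)

/-- Membership in the varClosure `J⁺_D` of a variable set `J` under dependencies `D`. -/
inductive InClosure (D : Set (Set ℕ × Set ℕ)) (J : Set ℕ) : ℕ → Prop
  | base {n : ℕ} : n ∈ J → InClosure D J n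
  | step {U V : Set ℕ} {n : ℕ} : (U, V) ∈ D → (∀ m ∈ U, InClosure D J m) → n ∈ V →
      InClosure D J n

/-- The varClosure `J⁺_D`: the least superset of `J` such that whenever `(U ⇝ V) ∈ D`
and `U ⊆ J⁺_D` then `V ⊆ J⁺_D`. -/
def varClosure (D : Set (Set ℕ × Set ℕ)) (J : Set ℕ) : Set ℕ := { n | InClosure D J n }

/-- `fd(F, P)`: the instantiations of the functional dependencies of `F` at the
predicates of `P`. -/
def fdInst (F : Set (ℕ × Set ℕ × Set ℕ)) (P : Set OPred) : Set (Set ℕ × Set ℕ) :=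
  { d | ∃ π ∈ P, ∃ X Y, (π.cls, X, Y) ∈ F ∧ d = (π.ftvAt X, π.ftvAt Y) }

/-- `nono(A)`: no two distinct axioms of the same class overlap on the determining
positions of a declared functional dependency. -/
def Nono (F : Set (ℕ × Set ℕ × Set ℕ)) (A : Set Axm) : Prop :=
  ∀ ax ∈ A, ∀ ax' ∈ A, ax ≠ ax' → ax.head.cls = ax'.head.cls →
    ∀ X Y : Set ℕ, (ax.head.cls, X, Y) ∈ F →
      ¬ ∃ S₀ S₁ : ℕ → Ty,
        AgreeOn X (ax.head.args.map (Ty.subst S₀)) (ax'.head.args.map (Ty.subst S₁))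

/-- `cov(A)`: for every axiom and every functional dependency of its class, the
variables in the determined positions are in the varClosure of the variables in the
determining positions under the dependencies induced by the axiom's context. -/
def Cov (F : Set (ℕ × Set ℕ × Set ℕ)) (A : Set Axm) : Prop :=
  ∀ ax ∈ A, ∀ X Y : Set ℕ, (ax.head.cls, X, Y) ∈ F →
    ax.head.ftvAt Y ⊆ varClosure (fdInst F { q | q ∈ ax.ctx }) (ax.head.ftvAt X)

/-- `S improves P` by the Fundep rule: there are two predicates of a class `C`
entailed by `P` that agree on the determining positions `X` of a declared dependency
`(C, X, Y)`, and `S` is a most general unifier of their determined positions `Y`. -/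
def Improves (F : Set (ℕ × Set ℕ × Set ℕ)) (A : Set Axm) (S : ℕ → Ty)
    (P : List OPred) : Prop :=
  ∃ (C : ℕ) (τs υs : List Ty) (X Y : Set ℕ),
    Entails A { π | π ∈ P } ⟨C, τs⟩ ∧
    Entails A { π | π ∈ P } ⟨C, υs⟩ ∧
    (C, X, Y) ∈ F ∧
    AgreeOn X τs υs ∧
    (∀ y ∈ Y, τs[y]?.map (Ty.subst S) = υs[y]?.map (Ty.subst S)) ∧
    (∀ U : ℕ → Ty, (∀ y ∈ Y, τs[y]?.map (Ty.subst U) = υs[y]?.map (Ty.subst U)) →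
      ∃ U' : ℕ → Ty, ∀ n, U n = Ty.subst U' (S n))

/-- `gr_A(P)`: the satisfiable ground instances of the predicate list `P`. -/
def grPreds (A : Set Axm) (P : List OPred) : Set (List OPred) :=
  { Q | ∃ U : ℕ → Ty, GroundSubst U ∧ (∀ π ∈ P, Entails A ∅ (π.subst U)) ∧
        Q = P.map (OPred.subst U) }


/-!
A ground instance `U` of `P` that is entailed by the axioms also entails the two improving
predicates. Under `nono` the closed derivations of two predicates agreeing on the positions `X`
start with the same axiom, and `cov` propagates the agreement of the two instantiating
substitutions from the variables at `X` through the context to the variables at `Y`; so closed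
entailment respects every declared dependency. Hence `U` unifies the `Y`-positions and factors as
`U' ∘ S`, and grounding `U'` gives a ground instance of `S P` with the same image. The converse
inclusion holds for any `S`.
-/

theorem Ty.subst_subst (U S : ℕ → Ty) (t : Ty) :
    (t.subst S).subst U = t.subst fun n => (S n).subst U := by
  induction t with
  | var n => rfl
  | const k => rfl
  | arrow a b iha ihb => simp only [Ty.subst, iha, ihb]

theorem OPred.subst_subst (U S : ℕ → Ty) (π : OPred) :
    (π.subst S).subst U = π.subst fun n => (S n).subst U := by
  simp only [OPred.subst, List.map_map, Function.comp_def, Ty.subst_subst]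

theorem Ty.subst_eq_subst_iff {S₀ S₁ : ℕ → Ty} {t : Ty} :
    t.subst S₀ = t.subst S₁ ↔ ∀ n ∈ t.vars, S₀ n = S₁ n := by
  induction t with
  | var m => simp [Ty.subst, Ty.vars]
  | const k => simp [Ty.subst, Ty.vars]
  | arrow a b iha ihb =>
    simp only [Ty.subst, Ty.arrow.injEq, iha, ihb, Ty.vars, Set.mem_union, or_imp, forall_and]

theorem Ty.Ground.subst {U : ℕ → Ty} (hU : GroundSubst U) (t : Ty) : (t.subst U).Ground := by
  induction t with
  | var n => exact hU n
  | const k => trivial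
  | arrow a b iha ihb => exact ⟨iha, ihb⟩

theorem Ty.Ground.of_subst {U : ℕ → Ty} {t : Ty} (h : (t.subst U).Ground) :
    ∀ n ∈ t.vars, (U n).Ground := by
  induction t with
  | var m => rintro n rfl; exact h
  | const k => simp [Ty.vars]
  | arrow a b iha ihb =>
    rintro n (hn | hn)
    exacts [iha h.1 n hn, ihb h.2 n hn]

open Classical in
noncomputable def groundify (U : ℕ → Ty) : ℕ → Ty :=
  fun n => if (U n).Ground then U n else .const 0

theorem groundSubst_groundify (U : ℕ → Ty) : GroundSubst (groundify U) := by
  intro n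
  unfold groundify
  split_ifs with h
  exacts [h, trivial]

theorem OPred.subst_groundify {U : ℕ → Ty} {π : OPred}
    (h : ∀ t ∈ π.args, (t.subst U).Ground) : π.subst (groundify U) = π.subst U := by
  simp only [OPred.subst, OPred.mk.injEq, true_and]
  refine List.map_congr_left fun t ht => Ty.subst_eq_subst_iff.2 fun n hn => ?_
  exact if_pos (Ty.Ground.of_subst (h t ht) n hn)

theorem OPred.agreeOn_subst_iff {S₀ S₁ : ℕ → Ty} {π : OPred} {X : Set ℕ} :
    AgreeOn X (π.subst S₀).args (π.subst S₁).args ↔ ∀ n ∈ π.ftvAt X, S₀ n = S₁ n := by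
  simp only [AgreeOn, OPred.subst, OPred.ftvAt, List.getElem?_map, Set.mem_iUnion]
  constructor
  · rintro h n ⟨i, hi, hn⟩
    cases harg : π.args[i]? with
    | none => simp [harg] at hn
    | some t =>
      have := h i hi
      simp only [harg, Option.map_some, Option.some.injEq] at this hn
      exact Ty.subst_eq_subst_iff.1 this n hn
  · intro h i hi
    cases harg : π.args[i]? with
    | none => rfl
    | some t =>
      simp only [Option.map_some, Option.some.injEq]
      exact Ty.subst_eq_subst_iff.2 fun n hn => h n ⟨i, hi, by simpa [harg] using hn⟩

theorem varClosure_subset {D : Set (Set ℕ × Set ℕ)} {J T : Set ℕ} (hJ : J ⊆ T)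
    (hD : ∀ d ∈ D, d.1 ⊆ T → d.2 ⊆ T) : varClosure D J ⊆ T := by
  intro n hn
  induction hn with
  | base hn => exact hJ hn
  | step hUV _ hnV ih => exact hD _ hUV ih hnV

theorem Entails.subst {A : Set Axm} {P P' : Set OPred} {π : OPred} (h : Entails A P π)
    (U : ℕ → Ty) (hP : ∀ ρ ∈ P, Entails A P' (ρ.subst U)) : Entails A P' (π.subst U) := by
  induction h with
  | assume hmem => exact hP _ hmem
  | axm hax heq _ ih =>
    subst heq
    rw [OPred.subst_subst]
    exact .axm hax rfl fun q hq => OPred.subst_subst U _ q ▸ ih q hq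

theorem Entails.agreeOn_of_fundep {F : Set (ℕ × Set ℕ × Set ℕ)} {A : Set Axm}
    (hnono : Nono F A) (hcov : Cov F A) {π₁ π₂ : OPred} (h₁ : Entails A ∅ π₁)
    (h₂ : Entails A ∅ π₂) (hcls : π₁.cls = π₂.cls) {X Y : Set ℕ} (hF : (π₁.cls, X, Y) ∈ F)
    (hX : AgreeOn X π₁.args π₂.args) : AgreeOn Y π₁.args π₂.args := by
  induction h₁ generalizing π₂ X Y with
  | assume hmem => exact absurd hmem (Set.notMem_empty _)
  | @axm ax S₀ π hax heq _ ih =>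
    cases h₂ with
    | assume hmem => exact absurd hmem (Set.notMem_empty _)
    | @axm ax' S₁ _ hax' heq' hctx' =>
      subst heq heq'
      obtain rfl : ax = ax' := by
        by_contra hne
        exact hnono ax hax ax' hax' hne hcls X Y hF ⟨S₀, S₁, hX⟩
      refine OPred.agreeOn_subst_iff.2 (subset_trans (hcov ax hax X Y hF) ?_)
      refine varClosure_subset (OPred.agreeOn_subst_iff.1 hX) ?_
      rintro _ ⟨q, hq, X', Y', hF', rfl⟩ hX'
      exact OPred.agreeOn_subst_iff.1
        (ih q hq (hctx' q hq) rfl hF' (OPred.agreeOn_subst_iff.2 hX'))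

theorem grPreds_map_subst_subset (A : Set Axm) (S : ℕ → Ty) (P : List OPred) :
    grPreds A (P.map (OPred.subst S)) ⊆ grPreds A P := by
  rintro _ ⟨U, hUg, hUent, rfl⟩
  refine ⟨fun n => (S n).subst U, fun n => Ty.Ground.subst hUg (S n), fun π hπ => ?_, ?_⟩
  · exact OPred.subst_subst U S π ▸ hUent _ (List.mem_map_of_mem hπ)
  · simp only [List.map_map, Function.comp_def, OPred.subst_subst]

theorem grPreds_subset_map_subst {A : Set Axm} {S : ℕ → Ty} {P : List OPred}
    (hfactor : ∀ U, GroundSubst U → (∀ π ∈ P, Entails A ∅ (π.subst U)) →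
      ∃ U' : ℕ → Ty, ∀ n, U n = (S n).subst U') :
    grPreds A P ⊆ grPreds A (P.map (OPred.subst S)) := by
  rintro _ ⟨U, hUg, hUent, rfl⟩
  obtain ⟨U', hU'⟩ := hfactor U hUg hUent
  have hU : U = fun n => (S n).subst U' := funext hU'
  have hgroundify (π : OPred) : (π.subst S).subst (groundify U') = π.subst U := by
    rw [OPred.subst_groundify, OPred.subst_subst, hU]
    simp only [OPred.subst, List.mem_map]
    rintro _ ⟨t, -, rfl⟩
    rw [Ty.subst_subst, ← hU]
    exact Ty.Ground.subst hUg t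
  refine ⟨groundify U', groundSubst_groundify U', ?_, ?_⟩
  · simp only [List.mem_map]
    rintro _ ⟨π, hπ, rfl⟩
    exact hgroundify π ▸ hUent π hπ
  · simp only [List.map_map, Function.comp_def, hgroundify]

/-- Soundness of improvement: if `S` improves `P` (via the Fundep rule), then the
satisfiable ground instances of `P` and of `S P` coincide. -/
theorem improvement_sound (F : Set (ℕ × Set ℕ × Set ℕ)) (A : Set Axm)
    (hnono : Nono F A) (hcov : Cov F A)
    {S : ℕ → Ty} {P : List OPred} (himp : Improves F A S P) :
    grPreds A P = grPreds A (P.map (OPred.subst S)) := by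
  obtain ⟨C, τs, υs, X, Y, hτ, hυ, hF, hX, -, hmgu⟩ := himp
  refine subset_antisymm (grPreds_subset_map_subst fun U hUg hUent => hmgu U ?_)
    (grPreds_map_subst_subset A S P)
  have hτU := hτ.subst U hUent
  have hυU := hυ.subst U hUent
  have hXU : AgreeOn X (OPred.subst U ⟨C, τs⟩).args (OPred.subst U ⟨C, υs⟩).args := by
    intro i hi
    simp only [OPred.subst, List.getElem?_map, hX i hi]
  have hYU := Entails.agreeOn_of_fundep hnono hcov hτU hυU rfl hF hXU
  simpa only [AgreeOn, OPred.subst, List.getElem?_map] using hYU
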